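/- arXiv:1608.00181 — 6 statements merged into one kernel-verified Lean document; each statement's English description precedes it below -/
import Mathlib

section
/- A nonzero Kronecker module M of type (2,2) on V is semistable if and only if there do not exist A, B ∈ SL₂(ℂ) such that the 2×2 matrix of linear functionals x ↦ A·M(x)·B has an identically vanishing row or an identically vanishing column; equivalently, M is semistable if and only if M is not SL₂(ℂ)×SL₂(ℂ)-equivalent to a matrix of the form [[g, h],[0, 0]] or [[g, 0],[h, 0]] for some g, h ∈ V*. -/
/-!
A pair `(V₁, V₂)` violating semistability has one of two shapes: `V₂ = 0` and `V₁` contains a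
common kernel vector `v` of all `M x`, or `V₁ = ℂ²` and `V₂` is proper, hence lies in the kernel of
a nonzero covector `φ`, so that `φ M(x) = 0` for all `x`. An element of `SL₂` with first column `v`
(first row `φ`) turns these into a vanishing column (row) of `A M(x) B`; conversely a vanishing
column `j` (row `i`) yields the kernel vector `B eⱼ` (the covector `eᵢᵀ A`).
Rows reduce to columns by transposing.
-/

/-- Drezet's semistability for Kronecker modules of type (2,2): for every pair of
subspaces `V₁, V₂ ⊆ ℂ²` with `(V₁,V₂) ≠ (0,0)`, `(V₁,V₂) ≠ (ℂ²,ℂ²)` and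
`M(x)(V₁) ⊆ V₂` for all `x`, one has `dim V₂ ≥ dim V₁`. -/
def KroneckerSemistable {V : Type*} [AddCommGroup V] [Module ℂ V]
    (M : V →ₗ[ℂ] Matrix (Fin 2) (Fin 2) ℂ) : Prop :=
  ∀ V₁ V₂ : Submodule ℂ (Fin 2 → ℂ),
    ¬(V₁ = ⊥ ∧ V₂ = ⊥) → ¬(V₁ = ⊤ ∧ V₂ = ⊤) →
    (∀ (x : V), ∀ w ∈ V₁, (M x).mulVec w ∈ V₂) →
    Module.finrank ℂ V₁ ≤ Module.finrank ℂ V₂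

open Matrix Module

namespace Matrix

variable {K : Type*} [Field K]

lemma SpecialLinearGroup.exists_mulVec_single_eq {v : Fin 2 → K} (hv : v ≠ 0) :
    ∃ S : SpecialLinearGroup (Fin 2) K, (S : Matrix (Fin 2) (Fin 2) K) *ᵥ Pi.single 0 1 = v := by
  by_cases h : v 0 = 0
  · have h1 : v 1 ≠ 0 := fun h1 => hv (funext fun k => by fin_cases k <;> assumption)
    refine ⟨⟨!![v 0, -(v 1)⁻¹; v 1, 0], by simp [det_fin_two_of, h1]⟩, ?_⟩
    funext k; fin_cases k <;> simp
  · refine ⟨⟨!![v 0, 0; v 1, (v 0)⁻¹], by simp [det_fin_two_of, h]⟩, ?_⟩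
    funext k; fin_cases k <;> simp

lemma exists_ne_zero_dotProduct_eq_zero_of_lt_top {n : Type*} [Fintype n] [DecidableEq n]
    {p : Submodule K (n → K)} (hp : p < ⊤) : ∃ φ ≠ 0, ∀ w ∈ p, φ ⬝ᵥ w = 0 := by
  obtain ⟨f, hf, hpf⟩ := p.exists_le_ker_of_lt_top hp
  refine ⟨(dotProductEquiv K n).symm f, by simpa using hf, fun w hw => ?_⟩
  have hfw := LinearMap.mem_ker.1 (hpf hw)
  rwa [← (dotProductEquiv K n).apply_symm_apply f] at hfw

variable {ι : Type*} (M : ι → Matrix (Fin 2) (Fin 2) K)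

lemma exists_specialLinearGroup_col_eq_zero_iff :
    (∃ A B : SpecialLinearGroup (Fin 2) K, ∃ j : Fin 2, ∀ (x : ι) (i : Fin 2),
      ((A : Matrix (Fin 2) (Fin 2) K) * M x * (B : Matrix (Fin 2) (Fin 2) K)) i j = 0) ↔
      ∃ v ≠ 0, ∀ x, M x *ᵥ v = 0 := by
  constructor
  · rintro ⟨A, B, j, hcol⟩
    refine ⟨(B : Matrix (Fin 2) (Fin 2) K) *ᵥ Pi.single j 1, fun h => ?_, fun x => ?_⟩
    · have := eq_zero_of_mulVec_eq_zero B.det_ne_zero h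
      simpa using congrFun this j
    · have hcolx : (A * M x * B : Matrix (Fin 2) (Fin 2) K) *ᵥ Pi.single j 1 = 0 :=
        funext fun i => by simpa [mulVec_single_one] using hcol x i
      refine eq_zero_of_mulVec_eq_zero A.det_ne_zero ?_
      rwa [mulVec_mulVec, mulVec_mulVec]
  · rintro ⟨v, hv, hMv⟩
    obtain ⟨S, hS⟩ := SpecialLinearGroup.exists_mulVec_single_eq hv
    refine ⟨1, S, 0, fun x i => ?_⟩
    have hcol : (M x * S : Matrix (Fin 2) (Fin 2) K) *ᵥ Pi.single 0 1 = 0 := by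
      rw [← mulVec_mulVec, hS, hMv x]
    simpa [mulVec_single_one] using congrFun hcol i

lemma exists_specialLinearGroup_row_eq_zero_iff :
    (∃ A B : SpecialLinearGroup (Fin 2) K, ∃ i : Fin 2, ∀ (x : ι) (j : Fin 2),
      ((A : Matrix (Fin 2) (Fin 2) K) * M x * (B : Matrix (Fin 2) (Fin 2) K)) i j = 0) ↔
      ∃ φ ≠ 0, ∀ x, φ ᵥ* M x = 0 := by
  have hcol := exists_specialLinearGroup_col_eq_zero_iff fun x => (M x)ᵀ
  simp only [mulVec_transpose] at hcol
  rw [← hcol]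
  have hT (A N B : Matrix (Fin 2) (Fin 2) K) (i j : Fin 2) :
      (Bᵀ * Nᵀ * Aᵀ) j i = (A * N * B) i j := by
    rw [← transpose_mul, ← transpose_mul, transpose_apply, Matrix.mul_assoc]
  constructor
  · rintro ⟨A, B, i, hrow⟩
    exact ⟨B.transpose, A.transpose, i, fun x j => by simpa [hT] using hrow x j⟩
  · rintro ⟨A, B, i, hrow⟩
    refine ⟨B.transpose, A.transpose, i, fun x j => ?_⟩
    simpa [← hT _ (M x)ᵀ] using hrow x j

end Matrix

section Kronecker

variable {V : Type*} [AddCommGroup V] [Module ℂ V] (M : V →ₗ[ℂ] Matrix (Fin 2) (Fin 2) ℂ)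

lemma not_kroneckerSemistable_of_mulVec_eq_zero {v : Fin 2 → ℂ} (hv : v ≠ 0)
    (hMv : ∀ x, M x *ᵥ v = 0) : ¬ KroneckerSemistable M := by
  intro hM
  have hspan : Submodule.span ℂ {v} ≠ ⊥ := by simpa using hv
  have := hM (Submodule.span ℂ {v}) ⊥ (by simp [hspan]) (by simp) fun x w hw => by
    obtain ⟨c, rfl⟩ := Submodule.mem_span_singleton.1 hw
    simp [mulVec_smul, hMv x]
  simp [finrank_span_singleton hv] at this

lemma not_kroneckerSemistable_of_vecMul_eq_zero {φ : Fin 2 → ℂ} (hφ : φ ≠ 0)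
    (hφM : ∀ x, φ ᵥ* M x = 0) : ¬ KroneckerSemistable M := by
  intro hM
  set W := LinearMap.ker (dotProductEquiv ℂ (Fin 2) φ)
  have hW : W ≠ ⊤ := by simpa [W, LinearMap.ker_eq_top] using hφ
  have := hM ⊤ W (by simp) (by simpa using hW) fun x w _ => by
    change φ ⬝ᵥ (M x *ᵥ w) = 0
    rw [dotProduct_mulVec, hφM x, zero_dotProduct]
  have hlt := Submodule.finrank_lt hW
  rw [finrank_top] at this
  omega

lemma exists_vecMul_or_mulVec_eq_zero_of_not_kroneckerSemistable
    (hM : ¬ KroneckerSemistable M) :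
    (∃ φ ≠ 0, ∀ x, φ ᵥ* M x = 0) ∨ ∃ v ≠ 0, ∀ x, M x *ᵥ v = 0 := by
  simp only [KroneckerSemistable, not_forall, not_le] at hM
  obtain ⟨V₁, V₂, -, hTop, hMV, hlt⟩ := hM
  rcases eq_or_ne V₂ ⊥ with rfl | hV₂
  · have hV₁ : V₁ ≠ ⊥ := by rintro rfl; simp at hlt
    obtain ⟨v, hv, hv0⟩ := V₁.exists_mem_ne_zero_of_ne_bot hV₁
    exact Or.inr ⟨v, hv0, fun x => by simpa using hMV x v hv⟩
  · have hV₁ : V₁ = ⊤ := by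
      have h₁ := V₁.finrank_le
      have h₂ := Submodule.one_le_finrank_iff.2 hV₂
      rw [finrank_fin_fun] at h₁
      exact Submodule.eq_top_of_finrank_eq (by rw [finrank_fin_fun]; omega)
    obtain ⟨φ, hφ, hφV₂⟩ := exists_ne_zero_dotProduct_eq_zero_of_lt_top
      (lt_top_iff_ne_top.2 fun h => hTop ⟨hV₁, h⟩)
    refine Or.inl ⟨φ, hφ, fun x => funext fun j => ?_⟩
    have := hφV₂ _ (hMV x (Pi.single j 1) (hV₁ ▸ Submodule.mem_top))
    rwa [dotProduct_mulVec, dotProduct_single_one] at this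

lemma not_kroneckerSemistable_iff : ¬ KroneckerSemistable M ↔
    (∃ φ ≠ 0, ∀ x, φ ᵥ* M x = 0) ∨ ∃ v ≠ 0, ∀ x, M x *ᵥ v = 0 := by
  refine ⟨exists_vecMul_or_mulVec_eq_zero_of_not_kroneckerSemistable M, ?_⟩
  rintro (⟨φ, hφ, hφM⟩ | ⟨v, hv, hMv⟩)
  · exact not_kroneckerSemistable_of_vecMul_eq_zero M hφ hφM
  · exact not_kroneckerSemistable_of_mulVec_eq_zero M hv hMv

end Kronecker

theorem kronecker_semistable_iff_general {V : Type*} [AddCommGroup V] [Module ℂ V]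
    (M : V →ₗ[ℂ] Matrix (Fin 2) (Fin 2) ℂ) :
    KroneckerSemistable M ↔
      ¬ ∃ A B : Matrix.SpecialLinearGroup (Fin 2) ℂ,
        (∃ i : Fin 2, ∀ (x : V) (j : Fin 2),
          ((A : Matrix (Fin 2) (Fin 2) ℂ) * M x * (B : Matrix (Fin 2) (Fin 2) ℂ)) i j = 0) ∨
        (∃ j : Fin 2, ∀ (x : V) (i : Fin 2),
          ((A : Matrix (Fin 2) (Fin 2) ℂ) * M x * (B : Matrix (Fin 2) (Fin 2) ℂ)) i j = 0) := by
  rw [← not_iff_not, not_not, not_kroneckerSemistable_iff,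
    ← exists_specialLinearGroup_row_eq_zero_iff, ← exists_specialLinearGroup_col_eq_zero_iff]
  simp only [exists_or]

/-- A nonzero Kronecker module of type (2,2) is semistable iff no
`SL₂×SL₂`-equivalent matrix of linear forms has an identically vanishing row
or an identically vanishing column. -/
theorem kronecker_semistable_iff {V : Type*} [AddCommGroup V] [Module ℂ V]
    [FiniteDimensional ℂ V]
    (M : V →ₗ[ℂ] Matrix (Fin 2) (Fin 2) ℂ) (hM : M ≠ 0) :
    KroneckerSemistable M ↔
      ¬ ∃ A B : Matrix.SpecialLinearGroup (Fin 2) ℂ,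
        (∃ i : Fin 2, ∀ (x : V) (j : Fin 2),
          ((A : Matrix (Fin 2) (Fin 2) ℂ) * M x * (B : Matrix (Fin 2) (Fin 2) ℂ)) i j = 0) ∨
        (∃ j : Fin 2, ∀ (x : V) (i : Fin 2),
          ((A : Matrix (Fin 2) (Fin 2) ℂ) * M x * (B : Matrix (Fin 2) (Fin 2) ℂ)) i j = 0) :=
  kronecker_semistable_iff_general M
end

section
/- A nonzero Kronecker module M of type (2,2) on V is stable if and only if there do not exist A, B ∈ SL₂(ℂ) and indices i, j ∈ {1,2} such that the (i,j)-entry of A·M(x)·B vanishes for all x ∈ V; equivalently, M is stable if and only if no matrix SL₂(ℂ)×SL₂(ℂ)-equivalent to M has a zero entry. -/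
/-- Drezet's stability for Kronecker modules of type (2,2): for every pair of
subspaces `V₁, V₂ ⊆ ℂ²` with `(V₁,V₂) ≠ (0,0)`, `(V₁,V₂) ≠ (ℂ²,ℂ²)` and
`M(x)(V₁) ⊆ V₂` for all `x`, one has `dim V₂ > dim V₁`. -/
def KroneckerStable {V : Type*} [AddCommGroup V] [Module ℂ V]
    (M : V →ₗ[ℂ] Matrix (Fin 2) (Fin 2) ℂ) : Prop :=
  ∀ V₁ V₂ : Submodule ℂ (Fin 2 → ℂ),
    ¬(V₁ = ⊥ ∧ V₂ = ⊥) → ¬(V₁ = ⊤ ∧ V₂ = ⊤) →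
    (∀ (x : V), ∀ w ∈ V₁, (M x).mulVec w ∈ V₂) →
    Module.finrank ℂ V₁ < Module.finrank ℂ V₂

/-!
A zero `(i, j)`-entry of `A · M(x) · B` for all `x` says that every `M(x)` maps the `j`-th column
of `B` into the kernel of the `i`-th row of `A`, and over a field every nonzero vector is a row of
some matrix in `SL₂`. So both sides of the equivalence amount to the absence of nonzero `φ, v`
with `φ · M(x) · v = 0` for all `x`. Such a pair destabilises `M` via `(ℂ v, ker φ)`; conversely a
destabilising pair `(V₁, V₂)`, having `dim V₂ ≤ dim V₁`, must have `V₁ ≠ 0` and `V₂ ≠ ℂ²`, which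
yields `v ∈ V₁` and `φ` vanishing on `V₂`.
-/

open Matrix

lemma Matrix.SpecialLinearGroup.exists_row_eq {K : Type*} [Field K] {v : Fin 2 → K}
    (hv : v ≠ 0) (i : Fin 2) : ∃ g : SpecialLinearGroup (Fin 2) K, g i = v := by
  have hcop : IsCoprime (v 0) (v 1) := by
    by_cases h0 : v 0 = 0
    · have h1 : v 1 ≠ 0 := fun h1 => hv (funext fun k => by fin_cases k <;> assumption)
      exact ⟨0, (v 1)⁻¹, by simp [h1]⟩
    · exact ⟨(v 0)⁻¹, 0, by simp [h0]⟩
  obtain ⟨g, h0, h1⟩ := hcop.exists_SL2_row i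
  exact ⟨g, funext fun k => by fin_cases k <;> assumption⟩

theorem exists_SL2_entry_eq_zero_iff {K ι : Type*} [Field K]
    (N : ι → Matrix (Fin 2) (Fin 2) K) :
    (∃ (A B : SpecialLinearGroup (Fin 2) K) (i j : Fin 2),
        ∀ x, ((A : Matrix (Fin 2) (Fin 2) K) * N x * (B : Matrix (Fin 2) (Fin 2) K)) i j = 0) ↔
      ∃ φ v : Fin 2 → K, φ ≠ 0 ∧ v ≠ 0 ∧ ∀ x, φ ⬝ᵥ N x *ᵥ v = 0 := by
  simp only [mul_mul_apply]
  constructor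
  · rintro ⟨A, B, i, j, h⟩
    refine ⟨A i, (B : Matrix (Fin 2) (Fin 2) K)ᵀ j, A.row_ne_zero i, ?_, h⟩
    simpa only [SpecialLinearGroup.coe_transpose] using B.transpose.row_ne_zero j
  · rintro ⟨φ, v, hφ, hv, h⟩
    obtain ⟨A, hA⟩ := SpecialLinearGroup.exists_row_eq hφ 0
    obtain ⟨C, hC⟩ := SpecialLinearGroup.exists_row_eq hv 0
    refine ⟨A, C.transpose, 0, 0, fun x => ?_⟩
    simpa [SpecialLinearGroup.coe_transpose, hA, hC] using h x

lemma Submodule.exists_dotProduct_eq_zero_of_ne_top {K n : Type*} [Field K] [Fintype n]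
    [DecidableEq n] {W : Submodule K (n → K)} (hW : W ≠ ⊤) :
    ∃ φ : n → K, φ ≠ 0 ∧ ∀ w ∈ W, φ ⬝ᵥ w = 0 := by
  obtain ⟨f, hf, hWf⟩ := W.exists_le_ker_of_lt_top hW.lt_top
  refine ⟨(dotProductEquiv K n).symm f, by simpa using hf, fun w hw => ?_⟩
  rw [← dotProductEquiv_apply_apply, LinearEquiv.apply_symm_apply]
  exact hWf hw

section Kronecker

variable {V : Type*} [AddCommGroup V] [Module ℂ V] (M : V →ₗ[ℂ] Matrix (Fin 2) (Fin 2) ℂ)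

lemma not_kroneckerStable_of_dotProduct_eq_zero {φ v : Fin 2 → ℂ} (hφ : φ ≠ 0) (hv : v ≠ 0)
    (h : ∀ x, φ ⬝ᵥ M x *ᵥ v = 0) : ¬ KroneckerStable M := by
  set f := dotProductEquiv ℂ (Fin 2) φ
  have hker : LinearMap.ker f ≠ ⊤ := by
    rw [Ne, LinearMap.ker_eq_top]
    simpa [f] using hφ
  intro hstab
  have hlt := hstab (ℂ ∙ v) (LinearMap.ker f)
    (fun h => hv (Submodule.span_singleton_eq_bot.mp h.1)) (fun h => hker h.2) (by
      intro x w hw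
      obtain ⟨c, rfl⟩ := Submodule.mem_span_singleton.mp hw
      simp only [f, LinearMap.mem_ker, dotProductEquiv_apply_apply, mulVec_smul,
        dotProduct_smul, h x, smul_zero])
  have hker_lt := Submodule.finrank_lt hker
  rw [finrank_span_singleton hv, Module.finrank_fin_fun] at *
  omega

lemma exists_dotProduct_eq_zero_of_not_kroneckerStable (h : ¬ KroneckerStable M) :
    ∃ φ v : Fin 2 → ℂ, φ ≠ 0 ∧ v ≠ 0 ∧ ∀ x, φ ⬝ᵥ M x *ᵥ v = 0 := by
  simp only [KroneckerStable, not_forall, not_lt] at h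
  obtain ⟨V₁, V₂, hbot, htop, hinv, hle⟩ := h
  have hV₁ : V₁ ≠ ⊥ := by
    rintro rfl
    exact hbot ⟨rfl, Submodule.finrank_eq_zero.mp (by simpa using hle)⟩
  have hV₂ : V₂ ≠ ⊤ := by
    rintro rfl
    refine htop ⟨Submodule.eq_top_of_finrank_eq (le_antisymm (Submodule.finrank_le V₁) ?_), rfl⟩
    simpa using hle
  obtain ⟨v, hvV₁, hv⟩ := Submodule.exists_mem_ne_zero_of_ne_bot hV₁
  obtain ⟨φ, hφ, hφV₂⟩ := Submodule.exists_dotProduct_eq_zero_of_ne_top hV₂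
  exact ⟨φ, v, hφ, hv, fun x => hφV₂ _ (hinv x v hvV₁)⟩

end Kronecker

theorem kronecker_stable_iff_general {V : Type*} [AddCommGroup V] [Module ℂ V]
    (M : V →ₗ[ℂ] Matrix (Fin 2) (Fin 2) ℂ) :
    KroneckerStable M ↔
      ¬ ∃ (A B : Matrix.SpecialLinearGroup (Fin 2) ℂ) (i j : Fin 2),
        ∀ x : V,
          ((A : Matrix (Fin 2) (Fin 2) ℂ) * M x * (B : Matrix (Fin 2) (Fin 2) ℂ)) i j = 0 := by
  rw [exists_SL2_entry_eq_zero_iff]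
  refine ⟨fun hstab ⟨φ, v, hφ, hv, h⟩ => ?_, ?_⟩
  · exact not_kroneckerStable_of_dotProduct_eq_zero M hφ hv h hstab
  · exact not_imp_comm.mp (exists_dotProduct_eq_zero_of_not_kroneckerStable M)

/-- A nonzero Kronecker module of type (2,2) is stable iff no matrix of linear
forms `SL₂×SL₂`-equivalent to it has a zero entry. -/
theorem kronecker_stable_iff {V : Type*} [AddCommGroup V] [Module ℂ V]
    [FiniteDimensional ℂ V]
    (M : V →ₗ[ℂ] Matrix (Fin 2) (Fin 2) ℂ) (hM : M ≠ 0) :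
    KroneckerStable M ↔
      ¬ ∃ (A B : Matrix.SpecialLinearGroup (Fin 2) ℂ) (i j : Fin 2),
        ∀ x : V,
          ((A : Matrix (Fin 2) (Fin 2) ℂ) * M x * (B : Matrix (Fin 2) (Fin 2) ℂ)) i j = 0 :=
  kronecker_stable_iff_general M
end

section
/- If a Kronecker module M of type (2,2) on V is semistable but not stable, then there exist A, B ∈ SL₂(ℂ), nonzero linear functionals g, h ∈ V*, and a linear functional k ∈ V*, such that A·M(x)·B = [[g(x), k(x)],[0, h(x)]] for all x ∈ V (i.e., M is equivalent to an upper triangular matrix of linear forms with nonzero diagonal entries). -/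
/-!
If `(V₁, V₂)` violates stability, semistability forces `dim V₁ = dim V₂`, and as the pair is
neither `(0, 0)` nor `(ℂ², ℂ²)`, both are lines: every `M x` maps a line `ℂ v₁` into a line
`ℂ v₂`. Moving `v₁` and `v₂` to `e₀` by elements of `SL₂` makes all `M x` upper triangular, and
semistability survives the move. A vanishing diagonal entry would then give a destabilising
pair: `(ℂ e₀, 0)` if it is the `(0, 0)` entry, `(ℂ², ℂ e₀)` if it is the `(1, 1)` entry.
-/

section

open Matrix Module
open scoped MatrixGroups

theorem exists_SL2_mulVec_single_eq {K : Type*} [Field K] {v : Fin 2 → K} (hv : v ≠ 0) :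
    ∃ C : SL(2, K), (C : Matrix (Fin 2) (Fin 2) K) *ᵥ Pi.single 0 1 = v := by
  have hcop : IsCoprime (v 0) (v 1) := Semifield.isCoprime_iff.mpr <| by
    by_contra! h
    exact hv (funext fun i => by fin_cases i <;> simp [h.1, h.2])
  obtain ⟨C, h0, h1⟩ := hcop.exists_SL2_col 0
  exact ⟨C, funext fun i => by fin_cases i <;> simp [h0, h1]⟩

theorem exists_SL2_mul_mul_apply_one_zero {K ι : Type*} [Field K]
    (M : ι → Matrix (Fin 2) (Fin 2) K) {v₁ v₂ : Fin 2 → K} (hv₁ : v₁ ≠ 0) (hv₂ : v₂ ≠ 0)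
    (hM : ∀ i, M i *ᵥ v₁ ∈ K ∙ v₂) :
    ∃ A B : SL(2, K), ∀ i, ((A : Matrix (Fin 2) (Fin 2) K) * M i * B) 1 0 = 0 := by
  obtain ⟨B, hB⟩ := exists_SL2_mulVec_single_eq hv₁
  obtain ⟨C, hC⟩ := exists_SL2_mulVec_single_eq hv₂
  have hA : ((C⁻¹ : SL(2, K)) : Matrix (Fin 2) (Fin 2) K) *ᵥ v₂ = Pi.single 0 1 := by
    rw [← hC, mulVec_mulVec, ← Matrix.SpecialLinearGroup.coe_mul, inv_mul_cancel,
      Matrix.SpecialLinearGroup.coe_one, one_mulVec]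
  refine ⟨C⁻¹, B, fun i => ?_⟩
  obtain ⟨c, hc⟩ := Submodule.mem_span_singleton.mp (hM i)
  have hcol : (((C⁻¹ : SL(2, K)) : Matrix (Fin 2) (Fin 2) K) * M i * (B : Matrix (Fin 2) (Fin 2) K)) *ᵥ
      Pi.single 0 1 = c • Pi.single 0 1 := by
    rw [← mulVec_mulVec, ← mulVec_mulVec, hB, ← hc, mulVec_smul, hA]
  simpa [mulVec_single_one] using congrFun hcol 1

variable {V : Type*} [AddCommGroup V] [Module ℂ V]

def kroneckerSandwich (A B : Matrix (Fin 2) (Fin 2) ℂ) (M : V →ₗ[ℂ] Matrix (Fin 2) (Fin 2) ℂ) :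
    V →ₗ[ℂ] Matrix (Fin 2) (Fin 2) ℂ :=
  LinearMap.mulRight ℂ B ∘ₗ LinearMap.mulLeft ℂ A ∘ₗ M

@[simp]
theorem kroneckerSandwich_apply (A B : Matrix (Fin 2) (Fin 2) ℂ)
    (M : V →ₗ[ℂ] Matrix (Fin 2) (Fin 2) ℂ) (x : V) : kroneckerSandwich A B M x = A * M x * B :=
  rfl

namespace KroneckerSemistable

variable {M : V →ₗ[ℂ] Matrix (Fin 2) (Fin 2) ℂ}

theorem kroneckerSandwich (hss : KroneckerSemistable M) (A B : SL(2, ℂ)) :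
    KroneckerSemistable (_root_.kroneckerSandwich A B M) := by
  intro V₁ V₂ hbot htop hmaps
  let eA := (Matrix.SpecialLinearGroup.toLin' A).symm
  let eB := Matrix.SpecialLinearGroup.toLin' B
  have key := hss (V₁.map (eB : (Fin 2 → ℂ) →ₗ[ℂ] Fin 2 → ℂ))
    (V₂.map (eA : (Fin 2 → ℂ) →ₗ[ℂ] Fin 2 → ℂ))
    (by simpa only [Submodule.map_eq_bot_iff] using hbot)
    (by simpa only [Submodule.map_eq_top_iff] using htop)
    (by
      rintro x _ ⟨w, hw, rfl⟩
      refine ⟨_, hmaps x w hw, ?_⟩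
      rw [LinearEquiv.coe_coe, LinearEquiv.symm_apply_eq, LinearEquiv.coe_coe,
        Matrix.SpecialLinearGroup.toLin'_apply, Matrix.SpecialLinearGroup.toLin'_apply,
        toLin'_apply, toLin'_apply, kroneckerSandwich_apply, mulVec_mulVec, mulVec_mulVec,
        Matrix.mul_assoc])
  rwa [LinearEquiv.finrank_map_eq, LinearEquiv.finrank_map_eq] at key

theorem exists_line_mapsTo_line (hss : KroneckerSemistable M) (hns : ¬ KroneckerStable M) :
    ∃ v₁ v₂ : Fin 2 → ℂ, v₁ ≠ 0 ∧ v₂ ≠ 0 ∧ ∀ x, M x *ᵥ v₁ ∈ ℂ ∙ v₂ := by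
  simp only [KroneckerStable, not_forall, not_lt] at hns
  obtain ⟨V₁, V₂, hbot, htop, hmaps, hle⟩ := hns
  have heq := le_antisymm (hss V₁ V₂ hbot htop hmaps) hle
  have hV₁ : finrank ℂ V₁ = 1 := by
    have : finrank ℂ V₁ ≤ 2 := by simpa using V₁.finrank_le
    have : finrank ℂ V₁ ≠ 0 := fun h =>
      hbot ⟨Submodule.finrank_eq_zero.mp h, Submodule.finrank_eq_zero.mp (heq ▸ h)⟩
    have : finrank ℂ V₁ ≠ 2 := fun h =>
      htop ⟨Submodule.eq_top_of_finrank_eq (by simpa using h),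
        Submodule.eq_top_of_finrank_eq (by simpa [← heq] using h)⟩
    omega
  obtain ⟨v₁, hv₁V, hv₁, -⟩ :=
    (rank_submodule_eq_one_iff V₁).mp (rank_eq_one_iff_finrank_eq_one.mpr hV₁)
  obtain ⟨v₂, -, hv₂, hV₂⟩ :=
    (rank_submodule_eq_one_iff V₂).mp (rank_eq_one_iff_finrank_eq_one.mpr (heq ▸ hV₁))
  exact ⟨v₁, v₂, hv₁, hv₂, fun x => hV₂ (hmaps x v₁ hv₁V)⟩

theorem exists_mulVec_ne_zero (hss : KroneckerSemistable M) {v : Fin 2 → ℂ} (hv : v ≠ 0) :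
    ∃ x, M x *ᵥ v ≠ 0 := by
  by_contra! h
  have key := hss (ℂ ∙ v) ⊥ (by simp [hv]) (by simp)
    (fun x w hw => by
      obtain ⟨c, rfl⟩ := Submodule.mem_span_singleton.mp hw
      simp [mulVec_smul, h x])
  simp [finrank_span_singleton hv] at key

theorem exists_mulVec_notMem_span_singleton (hss : KroneckerSemistable M) (v : Fin 2 → ℂ) :
    ∃ x w, M x *ᵥ w ∉ ℂ ∙ v := by
  by_contra! h
  have hline : finrank ℂ (ℂ ∙ v) ≤ 1 := (finrank_span_le_card {v}).trans (by simp)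
  have key := hss ⊤ (ℂ ∙ v) (by simp) (fun h' => by rw [h'.2] at hline; simp at hline)
    (fun x w _ => h x w)
  simp at key
  omega

theorem entry_zero_zero_ne_zero (hss : KroneckerSemistable M) (hlow : ∀ x, M x 1 0 = 0) :
    entryLinearMap ℂ ℂ (0 : Fin 2) (0 : Fin 2) ∘ₗ M ≠ 0 := by
  intro h
  obtain ⟨x, hx⟩ := hss.exists_mulVec_ne_zero (v := Pi.single 0 1) (by simp)
  have h00 : M x 0 0 = 0 := LinearMap.congr_fun h x
  exact hx (funext fun i => by fin_cases i <;> simp [h00, hlow x])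

theorem entry_one_one_ne_zero (hss : KroneckerSemistable M) (hlow : ∀ x, M x 1 0 = 0) :
    entryLinearMap ℂ ℂ (1 : Fin 2) (1 : Fin 2) ∘ₗ M ≠ 0 := by
  intro h
  obtain ⟨x, w, hx⟩ := hss.exists_mulVec_notMem_span_singleton (Pi.single 0 1)
  have h11 : M x 1 1 = 0 := LinearMap.congr_fun h x
  refine hx (Submodule.mem_span_singleton.mpr ⟨(M x *ᵥ w) 0, funext fun i => ?_⟩)
  fin_cases i <;> simp [mulVec, dotProduct, Fin.sum_univ_two, h11, hlow x]

end KroneckerSemistable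

end

theorem kronecker_strictly_semistable_upper_triangular_general
    {V : Type*} [AddCommGroup V] [Module ℂ V]
    (M : V →ₗ[ℂ] Matrix (Fin 2) (Fin 2) ℂ)
    (hss : KroneckerSemistable M) (hns : ¬ KroneckerStable M) :
    ∃ (A B : Matrix.SpecialLinearGroup (Fin 2) ℂ) (g h k : V →ₗ[ℂ] ℂ),
      g ≠ 0 ∧ h ≠ 0 ∧
      ∀ x : V,
        (A : Matrix (Fin 2) (Fin 2) ℂ) * M x * (B : Matrix (Fin 2) (Fin 2) ℂ)
          = !![g x, k x; 0, h x] := by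
  obtain ⟨v₁, v₂, hv₁, hv₂, hmaps⟩ := hss.exists_line_mapsTo_line hns
  obtain ⟨A, B, hlow⟩ := exists_SL2_mul_mul_apply_one_zero M hv₁ hv₂ hmaps
  set N := kroneckerSandwich A B M
  have hssN : KroneckerSemistable N := hss.kroneckerSandwich A B
  refine ⟨A, B, Matrix.entryLinearMap ℂ ℂ 0 0 ∘ₗ N, Matrix.entryLinearMap ℂ ℂ 1 1 ∘ₗ N,
    Matrix.entryLinearMap ℂ ℂ 0 1 ∘ₗ N, hssN.entry_zero_zero_ne_zero hlow,
    hssN.entry_one_one_ne_zero hlow, fun x => ?_⟩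
  ext i j
  fin_cases i <;> fin_cases j <;> simp [N, hlow x]

/-- A strictly semistable Kronecker module of type (2,2) is `SL₂×SL₂`-equivalent to
an upper triangular matrix of linear forms with nonzero diagonal entries. -/
theorem kronecker_strictly_semistable_upper_triangular
    {V : Type*} [AddCommGroup V] [Module ℂ V] [FiniteDimensional ℂ V]
    (M : V →ₗ[ℂ] Matrix (Fin 2) (Fin 2) ℂ) (hM : M ≠ 0)
    (hss : KroneckerSemistable M) (hns : ¬ KroneckerStable M) :
    ∃ (A B : Matrix.SpecialLinearGroup (Fin 2) ℂ) (g h k : V →ₗ[ℂ] ℂ),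
      g ≠ 0 ∧ h ≠ 0 ∧
      ∀ x : V,
        (A : Matrix (Fin 2) (Fin 2) ℂ) * M x * (B : Matrix (Fin 2) (Fin 2) ℂ)
          = !![g x, k x; 0, h x] :=
  kronecker_strictly_semistable_upper_triangular_general M hss hns
end

section
/- Let g, h ∈ V* be linearly independent linear functionals and let M be the diagonal Kronecker module M(x) = diag(g(x), h(x)). Then for (A,B) ∈ SL₂(ℂ)×SL₂(ℂ), there exists a nonzero λ ∈ ℂ with A·M(x)·B⁻¹ = λ·M(x) for all x ∈ V if and only if there exist t ∈ ℂ* and ε ∈ {1, −1} such that A = diag(t, t⁻¹) and B = ε·diag(t, t⁻¹). In particular, the stabilizer of the projective class of M in SL₂(ℂ)×SL₂(ℂ) equals {(diag(t,t⁻¹), ε·diag(t,t⁻¹)) : t ∈ ℂ*, ε = ±1}. -/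
/-!
As `g` and `h` are linearly independent, `x ↦ (g x, h x)` is onto `ℂ²`, so the condition says
`A D = c D B` for every diagonal `D`. Taking `D = 1` gives `A = c B`, and then `A` commutes with
all diagonal matrices, hence is diagonal; comparing determinants gives `c² = 1`.
-/

open Function

theorem LinearMap.pi_surjective_of_linearIndependent {K V ι : Type*} [Field K] [AddCommGroup V]
    [Module K V] [Finite ι] {f : ι → V →ₗ[K] K} (hf : LinearIndependent K f) :
    Surjective (LinearMap.pi f) := by
  have hf' : LinearIndependent K fun i => ⇑(f i) :=
    hf.map' (LinearMap.ltoFun K V K K) (LinearMap.ker_eq_bot.mpr DFunLike.coe_injective)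
  rw [← LinearMap.range_eq_top, ← span_flip_eq_top_iff_linearIndependent.mpr hf',
    ← Submodule.span_eq (LinearMap.range (LinearMap.pi f)), LinearMap.coe_range]
  rfl

theorem forall_apply_iff_of_linearIndependent {K V : Type*} [Field K] [AddCommGroup V]
    [Module K V] {g h : V →ₗ[K] K} (hgh : LinearIndependent K ![g, h]) {P : K → K → Prop} :
    (∀ x, P (g x) (h x)) ↔ ∀ u v, P u v := by
  refine ⟨fun H u v => ?_, fun H x => H _ _⟩
  obtain ⟨x, hx⟩ := LinearMap.pi_surjective_of_linearIndependent hgh ![u, v]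
  have hu : g x = u := congrFun hx 0
  have hv : h x = v := congrFun hx 1
  exact hu ▸ hv ▸ H x

namespace Matrix

variable {R : Type*} [CommRing R]

theorem mul_diagonal_eq_smul_diagonal_mul_iff {A B : Matrix (Fin 2) (Fin 2) R} {c : R} :
    (∀ u v : R, A * !![u, 0; 0, v] = c • !![u, 0; 0, v] * B) ↔
      A = c • B ∧ A 0 1 = 0 ∧ A 1 0 = 0 := by
  constructor
  · intro h
    have hA : A = c • B := by simpa [← one_fin_two] using h 1 1
    have h₀ := congrFun₂ (h 1 0)
    refine ⟨hA, ?_, ?_⟩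
    · simpa [mul_apply, Fin.sum_univ_two, hA] using (h₀ 0 1).symm
    · simpa [mul_apply, Fin.sum_univ_two] using h₀ 1 0
  · rintro ⟨hA, h01, h10⟩ u v
    have hcomm : A * !![u, 0; 0, v] = !![u, 0; 0, v] * A := by
      rw [eta_fin_two A, h01, h10, mul_fin_two, mul_fin_two]
      simp only [mul_zero, zero_mul, add_zero, zero_add, mul_comm]
    rw [hcomm, hA, Matrix.mul_smul, Matrix.smul_mul]

end Matrix

namespace Matrix.SpecialLinearGroup

variable {n R : Type*} [DecidableEq n] [Fintype n] [CommRing R]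

theorem mul_mul_inv_eq_smul_iff (A B : SpecialLinearGroup n R) (X : Matrix n n R) (c : R) :
    (A : Matrix n n R) * X * (B⁻¹ : SpecialLinearGroup n R) = c • X ↔
      (A : Matrix n n R) * X = c • X * B := by
  have hB : ((B⁻¹ : SpecialLinearGroup n R) : Matrix n n R) * B = 1 := by
    rw [← coe_mul, inv_mul_cancel, coe_one]
  have hB' : (B : Matrix n n R) * (B⁻¹ : SpecialLinearGroup n R) = 1 := by
    rw [← coe_mul, mul_inv_cancel, coe_one]
  constructor
  · intro h
    rw [← h, Matrix.mul_assoc, hB, Matrix.mul_one]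
  · intro h
    rw [h, Matrix.mul_assoc, hB', Matrix.mul_one]

theorem pow_card_eq_one_of_coe_eq_smul {A B : SpecialLinearGroup n R} {c : R}
    (h : (A : Matrix n n R) = c • B) : c ^ Fintype.card n = 1 := by
  simpa using (congrArg det h).symm

variable {K : Type*} [Field K]

theorem off_diag_eq_zero_iff (A : SpecialLinearGroup (Fin 2) K) :
    (A 0 1 = 0 ∧ A 1 0 = 0) ↔ ∃ t ≠ 0, (A : Matrix (Fin 2) (Fin 2) K) = !![t, 0; 0, t⁻¹] := by
  constructor
  · rintro ⟨h01, h10⟩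
    have hdet : A 0 0 * A 1 1 = 1 := by
      have := A.det_coe
      rwa [det_fin_two, h01, h10, mul_zero, sub_zero] at this
    refine ⟨A 0 0, left_ne_zero_of_mul_eq_one hdet, ?_⟩
    rw [eta_fin_two (A : Matrix (Fin 2) (Fin 2) K), h01, h10, eq_inv_of_mul_eq_one_right hdet]
    rfl
  · rintro ⟨t, -, hA⟩
    simp [hA]

theorem exists_coe_eq_smul_and_off_diag_eq_zero_iff (A B : SpecialLinearGroup (Fin 2) K) :
    (∃ c : K, c ≠ 0 ∧ (A : Matrix (Fin 2) (Fin 2) K) = c • B ∧ A 0 1 = 0 ∧ A 1 0 = 0) ↔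
      ∃ t ε : K, t ≠ 0 ∧ (ε = 1 ∨ ε = -1) ∧ (A : Matrix (Fin 2) (Fin 2) K) = !![t, 0; 0, t⁻¹] ∧
        (B : Matrix (Fin 2) (Fin 2) K) = ε • !![t, 0; 0, t⁻¹] := by
  constructor
  · rintro ⟨c, -, hAB, hdiag⟩
    obtain ⟨t, ht, hA⟩ := (off_diag_eq_zero_iff A).mp hdiag
    have hc : c * c = 1 := by simpa [sq] using pow_card_eq_one_of_coe_eq_smul hAB
    refine ⟨t, c, ht, mul_self_eq_one_iff.mp hc, hA, ?_⟩
    rw [← hA, hAB, smul_smul, hc, one_smul]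
  · rintro ⟨t, ε, ht, hε, hA, hB⟩
    have hε2 : ε * ε = 1 := by rcases hε with rfl | rfl <;> norm_num
    exact ⟨ε, left_ne_zero_of_mul_eq_one hε2, by rw [hA, hB, smul_smul, hε2, one_smul],
      (off_diag_eq_zero_iff A).mpr ⟨t, ht, hA⟩⟩

end Matrix.SpecialLinearGroup

theorem stabilizer_diagonal_kronecker_module_general
    {V : Type*} [AddCommGroup V] [Module ℂ V]
    (g h : V →ₗ[ℂ] ℂ) (hgh : LinearIndependent ℂ ![g, h])
    (M : V →ₗ[ℂ] Matrix (Fin 2) (Fin 2) ℂ)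
    (hM : ∀ x : V, M x = !![g x, 0; 0, h x])
    (A B : Matrix.SpecialLinearGroup (Fin 2) ℂ) :
    (∃ c : ℂ, c ≠ 0 ∧ ∀ x : V,
        (A : Matrix (Fin 2) (Fin 2) ℂ) * M x *
          ((B⁻¹ : Matrix.SpecialLinearGroup (Fin 2) ℂ) : Matrix (Fin 2) (Fin 2) ℂ)
        = c • M x) ↔
      (∃ (t : ℂ) (ε : ℂ), t ≠ 0 ∧ (ε = 1 ∨ ε = -1) ∧
        (A : Matrix (Fin 2) (Fin 2) ℂ) = !![t, 0; 0, t⁻¹] ∧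
        (B : Matrix (Fin 2) (Fin 2) ℂ) = ε • !![t, 0; 0, t⁻¹]) := by
  rw [← Matrix.SpecialLinearGroup.exists_coe_eq_smul_and_off_diag_eq_zero_iff]
  refine exists_congr fun c => and_congr_right fun _ => ?_
  simp_rw [Matrix.SpecialLinearGroup.mul_mul_inv_eq_smul_iff, hM]
  exact (forall_apply_iff_of_linearIndependent hgh (P := fun u v =>
    (A : Matrix (Fin 2) (Fin 2) ℂ) * !![u, 0; 0, v] = c • !![u, 0; 0, v] * B)).trans
      Matrix.mul_diagonal_eq_smul_diagonal_mul_iff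

/-- The stabilizer of the projective class of the diagonal Kronecker module
`M(x) = diag(g(x), h(x))` with `g, h` linearly independent, under the
`SL₂(ℂ)×SL₂(ℂ)`-action `(A,B)·M = A M B⁻¹`, consists exactly of the pairs
`(diag(t,t⁻¹), ε·diag(t,t⁻¹))` with `t ∈ ℂ*` and `ε = ±1`. -/
theorem stabilizer_diagonal_kronecker_module
    {V : Type*} [AddCommGroup V] [Module ℂ V] [FiniteDimensional ℂ V]
    (g h : V →ₗ[ℂ] ℂ) (hgh : LinearIndependent ℂ ![g, h])
    (M : V →ₗ[ℂ] Matrix (Fin 2) (Fin 2) ℂ)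
    (hM : ∀ x : V, M x = !![g x, 0; 0, h x])
    (A B : Matrix.SpecialLinearGroup (Fin 2) ℂ) :
    (∃ c : ℂ, c ≠ 0 ∧ ∀ x : V,
        (A : Matrix (Fin 2) (Fin 2) ℂ) * M x *
          ((B⁻¹ : Matrix.SpecialLinearGroup (Fin 2) ℂ) : Matrix (Fin 2) (Fin 2) ℂ)
        = c • M x) ↔
      (∃ (t : ℂ) (ε : ℂ), t ≠ 0 ∧ (ε = 1 ∨ ε = -1) ∧
        (A : Matrix (Fin 2) (Fin 2) ℂ) = !![t, 0; 0, t⁻¹] ∧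
        (B : Matrix (Fin 2) (Fin 2) ℂ) = ε • !![t, 0; 0, t⁻¹]) :=
  stabilizer_diagonal_kronecker_module_general g h hgh M hM A B
end

section
/- Let v, v' ∈ V be nonzero vectors and let W, W' ⊆ V be linear subspaces with dim W = dim W' = 4, v ∈ W and v' ∈ W'. If v ∧ W = v' ∧ W' as subspaces of Λ²V, then v' is a nonzero scalar multiple of v and W = W'. -/
/-!
If `v'` were not a multiple of `v`, then for every `w' ∈ W'` the equality `v' ∧ w' = v ∧ w`
would give `v ∧ v' ∧ w' = 0`, forcing `W' ⊆ span {v, v'}`, which is too small. So `v' = c • v`,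
and then `v ∧ w = v ∧ c w'` gives `w - c w' ∈ span {v} ⊆ W'`, so `W ⊆ W'`; equal dimensions
finish. Both steps rest on the wedge of a linearly independent family being nonzero.
-/

open ExteriorAlgebra Submodule

section

variable {K V : Type*} [Field K] [AddCommGroup V] [Module K V]

theorem ιMulti_ne_zero_of_linearIndependent {n : ℕ} {f : Fin n → V}
    (hf : LinearIndependent K f) : ιMulti K n f ≠ 0 := by
  have h := (exteriorPower.ιMulti_family_linearIndependent_field (n := n) hf).ne_zero
    (Set.powersetCard.ofFinEmbEquiv (RelEmbedding.refl (· ≤ ·)))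
  simp only [exteriorPower.ιMulti_family, Equiv.symm_apply_apply] at h
  exact fun h0 => h (Subtype.ext h0)

theorem ιMulti_snoc {R M : Type*} [CommRing R] [AddCommGroup M] [Module R M] {n : ℕ}
    (f : Fin n → M) (w : M) :
    ιMulti R (n + 1) (Fin.snoc f w) = ιMulti R n f * ι R w := by
  rw [show ι R w = ιMulti R 1 ![w] by simp, ιMulti_mul_ιMulti, Fin.append_right_eq_snoc]
  rfl

theorem mem_span_of_ιMulti_mul_ι_eq_zero {n : ℕ} {f : Fin n → V} {w : V}
    (hf : LinearIndependent K f) (h : ιMulti K n f * ι K w = 0) :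
    w ∈ span K (Set.range f) := by
  by_contra hw
  exact ιMulti_ne_zero_of_linearIndependent (linearIndependent_finSnoc.2 ⟨hf, hw⟩)
    (by rw [ιMulti_snoc, h])

theorem mem_span_singleton_of_ι_mul_ι_eq_zero {v w : V} (hv : v ≠ 0)
    (h : ι K v * ι K w = 0) : w ∈ K ∙ v := by
  simpa using mem_span_of_ιMulti_mul_ι_eq_zero (f := ![v])
    (LinearIndependent.of_subsingleton 0 hv) (by simpa using h)

variable (K) in
/-- `v ∧ W ⊆ Λ²V`, with `Λ²V` seen inside the exterior algebra. -/
def wedgeLeft (v : V) (W : Submodule K V) : Submodule K (ExteriorAlgebra K V) :=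
  W.map (LinearMap.mulLeft K (ι K v) ∘ₗ ι K)

theorem mem_wedgeLeft {v : V} {W : Submodule K V} {x : ExteriorAlgebra K V} :
    x ∈ wedgeLeft K v W ↔ ∃ w ∈ W, ι K v * ι K w = x := by
  simp [wedgeLeft]

theorem mem_span_singleton_of_wedgeLeft_le {v v' : V} {W W' : Submodule K V} (hv : v ≠ 0)
    (hW' : 2 < Module.finrank K W') (h : wedgeLeft K v' W' ≤ wedgeLeft K v W) :
    v' ∈ K ∙ v := by
  by_contra hv'
  have hind : LinearIndependent K ![v, v'] :=
    (LinearIndependent.pair_iff' hv).2 fun c hc => hv' (mem_span_singleton.2 ⟨c, hc⟩)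
  have hle : W' ≤ span K (Set.range ![v, v']) := fun w' hw' => by
    obtain ⟨w, -, hw⟩ := mem_wedgeLeft.1 (h (mem_wedgeLeft.2 ⟨w', hw', rfl⟩))
    refine mem_span_of_ιMulti_mul_ι_eq_zero hind ?_
    rw [show ιMulti K 2 ![v, v'] = ι K v * ι K v' by simp, mul_assoc, ← hw, ← mul_assoc,
      ι_sq_zero, zero_mul]
  have : FiniteDimensional K (span K (Set.range ![v, v'])) :=
    FiniteDimensional.span_of_finite K (Set.finite_range _)
  have : Module.finrank K W' ≤ 2 :=
    (finrank_mono hle).trans ((finrank_range_le_card _).trans_eq (Fintype.card_fin 2))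
  omega

theorem le_of_wedgeLeft_le_smul {v : V} {c : K} {W W' : Submodule K V} (hv : v ≠ 0)
    (hvW' : v ∈ W') (h : wedgeLeft K v W ≤ wedgeLeft K (c • v) W') : W ≤ W' := by
  intro w hw
  obtain ⟨w', hw', hww'⟩ := mem_wedgeLeft.1 (h (mem_wedgeLeft.2 ⟨w, hw, rfl⟩))
  have hdiff : w - c • w' ∈ K ∙ v := by
    refine mem_span_singleton_of_ι_mul_ι_eq_zero hv ?_
    rw [map_sub, mul_sub, ← hww', map_smul, map_smul, smul_mul_assoc, mul_smul_comm, sub_self]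
  simpa using W'.add_mem ((span_singleton_le_iff_mem v W').2 hvW' hdiff) (W'.smul_mem c hw')

end

theorem wedge_determines_line_and_space_general
    {V : Type*} [AddCommGroup V] [Module ℂ V]
    (v v' : V) (hv : v ≠ 0) (hv' : v' ≠ 0)
    (W W' : Submodule ℂ V)
    (hW : Module.finrank ℂ W = 4) (hW' : Module.finrank ℂ W' = 4)
    (hv'W' : v' ∈ W')
    (heq : W.map ((LinearMap.mulLeft ℂ (ExteriorAlgebra.ι ℂ v)) ∘ₗ (ExteriorAlgebra.ι ℂ))
         = W'.map ((LinearMap.mulLeft ℂ (ExteriorAlgebra.ι ℂ v')) ∘ₗ (ExteriorAlgebra.ι ℂ))) :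
    (∃ c : ℂ, c ≠ 0 ∧ v' = c • v) ∧ W = W' := by
  have hwedge : wedgeLeft ℂ v W = wedgeLeft ℂ v' W' := heq
  obtain ⟨c, rfl⟩ :=
    mem_span_singleton.1 (mem_span_singleton_of_wedgeLeft_le hv (by omega) hwedge.ge)
  have hc : c ≠ 0 := by
    rintro rfl
    exact hv' (zero_smul ℂ v)
  have hvW' : v ∈ W' := by simpa [hc] using W'.smul_mem c⁻¹ hv'W'
  have : FiniteDimensional ℂ W' := Module.finite_of_finrank_pos (by omega)
  exact ⟨⟨c, hc, rfl⟩,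
    eq_of_le_of_finrank_eq (le_of_wedgeLeft_le_smul hv hvW' hwedge.le) (hW.trans hW'.symm)⟩

/-- If `v, v'` are nonzero vectors of a finite-dimensional complex vector space `V`,
`W, W'` are 4-dimensional subspaces with `v ∈ W`, `v' ∈ W'`, and the subspaces
`v ∧ W = {v ∧ w : w ∈ W}` and `v' ∧ W'` of `Λ²V` coincide, then `v'` is a nonzero
scalar multiple of `v` and `W = W'`. -/
theorem wedge_determines_line_and_space
    {V : Type*} [AddCommGroup V] [Module ℂ V] [FiniteDimensional ℂ V]
    (v v' : V) (hv : v ≠ 0) (hv' : v' ≠ 0)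
    (W W' : Submodule ℂ V)
    (hW : Module.finrank ℂ W = 4) (hW' : Module.finrank ℂ W' = 4)
    (hvW : v ∈ W) (hv'W' : v' ∈ W')
    (heq : W.map ((LinearMap.mulLeft ℂ (ExteriorAlgebra.ι ℂ v)) ∘ₗ (ExteriorAlgebra.ι ℂ))
         = W'.map ((LinearMap.mulLeft ℂ (ExteriorAlgebra.ι ℂ v')) ∘ₗ (ExteriorAlgebra.ι ℂ))) :
    (∃ c : ℂ, c ≠ 0 ∧ v' = c • v) ∧ W = W' :=
  wedge_determines_line_and_space_general v v' hv hv' W W' hW hW' hv'W' heq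
end

section
/- For every integer n ≥ 3, the rational function T(n) ∈ ℚ(q) is in fact a polynomial in q with integer coefficients. -/
open RatFunc

/-- The variable `q` of the field of rational functions `ℚ(q)`. -/
noncomputable def q : RatFunc ℚ := RatFunc.X

/-- Virtual Poincaré polynomial of the moduli space of degree-2 stable maps to
`Gr(n-1, n+1)`. -/
noncomputable def A (n : ℕ) : RatFunc ℚ :=
  ((1 + q ^ (n + 1)) * (1 + q ^ 3) - q * (1 + q) * (q ^ 2 + q ^ (n - 1))) *
      ((1 - q ^ (n + 1)) * (1 - q ^ n) * (1 - q ^ (n - 1))) /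
    ((1 - q) ^ 3 * (1 - q ^ 2) ^ 2)

/-- Virtual Poincaré polynomial of the moduli space of degree-2 stable maps to
`ℙ^{n-1}`. -/
noncomputable def B (n : ℕ) : RatFunc ℚ :=
  (1 - q ^ (n + 1)) * (1 - q ^ n) * (1 - q ^ (n - 1)) / ((1 - q) ^ 2 * (1 - q ^ 2))

/-- Virtual Poincaré polynomial of the locus of rank-2 quadrics in
`ℙ(Sym²(ℂ^{n+1})*)`. -/
noncomputable def C (n : ℕ) : RatFunc ℚ :=
  (1 / 2) * (((1 - q ^ (n + 1)) / (1 - q)) ^ 2 + (1 - q ^ (2 * n + 2)) / (1 - q ^ 2)) -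
    (1 - q ^ (n + 1)) / (1 - q)

/-- Virtual Poincaré polynomial of the double symmetroid `T₄` (equivalently, of the
Kronecker moduli space `ℙ((ℂ^{n+1})* ⊗ gl₂)//SL₂×SL₂`). -/
noncomputable def T (n : ℕ) : RatFunc ℚ :=
  A n - (B n - 1) * ((1 - q ^ (n + 1)) / (1 - q)) -
    (((1 - q ^ (n - 1)) / (1 - q)) ^ 2 - 1) * C n

/-!
Writing `[m] = (1 - q^m)/(1 - q)` and `⟦m⟧ = (1 - q^m)(1 - q^(m+1))/((1 - q)(1 - q²))` for the
`q`-analogues of `m` and of the triangular number `m(m+1)/2`, both lie in `ℤ[q]`: the first is a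
geometric sum and the second satisfies the `q`-Pascal recursion `⟦m+1⟧ = ⟦m⟧ + q^m [m+1]`.
Everything in `T(n)` is a ring expression in these. The first factor of `A(n)` equals
`(1 - q⁴)(1 - q^n)`, so `A(n) = (1 + q²)[n] B(n)`; next `B(n) = [n+1] ⟦n-1⟧`; and `C(n)` is
`⟦n+1⟧ - [n+1]`, because `(p₁² + p₂)/2 = h₂` for the power sums and the complete symmetric
polynomial of `1, q, …, q^n`, and `h₂(1, …, q^n) = ⟦n+1⟧`.
-/

noncomputable def intPoly : Subring (RatFunc ℚ) :=
  ((algebraMap (Polynomial ℚ) (RatFunc ℚ)).comp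
    (Polynomial.mapRingHom (Int.castRingHom ℚ))).range

noncomputable def qNum (m : ℕ) : RatFunc ℚ := (1 - q ^ m) / (1 - q)

noncomputable def qTriangular (m : ℕ) : RatFunc ℚ :=
  (1 - q ^ m) * (1 - q ^ (m + 1)) / ((1 - q) * (1 - q ^ 2))

lemma one_sub_q_pow_ne_zero {k : ℕ} (hk : k ≠ 0) : 1 - q ^ k ≠ 0 := by
  rw [q, ← RatFunc.algebraMap_X, ← map_pow, ← map_one (algebraMap (Polynomial ℚ) (RatFunc ℚ)),
    ← map_sub]
  refine RatFunc.algebraMap_ne_zero fun h =>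
    Polynomial.X_pow_sub_C_ne_zero (R := ℚ) (Nat.pos_of_ne_zero hk) 1 ?_
  rw [map_one, ← neg_sub, h, neg_zero]

-- Tagged `simp` so that `field_simp` clears these denominators on its own.
@[simp]
lemma one_sub_q_ne_zero : 1 - q ≠ 0 := by
  simpa using one_sub_q_pow_ne_zero one_ne_zero

@[simp]
lemma one_sub_q_sq_ne_zero : 1 - q ^ 2 ≠ 0 :=
  one_sub_q_pow_ne_zero two_ne_zero

lemma q_mem_intPoly : q ∈ intPoly :=
  ⟨Polynomial.X, by simp [q]⟩

lemma qNum_eq_sum (m : ℕ) : qNum m = ∑ i ∈ Finset.range m, q ^ i := by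
  have hq : q ≠ 1 := fun h => one_sub_q_ne_zero (by rw [h, sub_self])
  rw [geom_sum_eq hq, qNum, ← neg_sub, ← neg_sub q, neg_div_neg_eq]

lemma qNum_mem_intPoly (m : ℕ) : qNum m ∈ intPoly := by
  rw [qNum_eq_sum]
  exact Subring.sum_mem _ fun i _ => Subring.pow_mem _ q_mem_intPoly i

lemma qTriangular_succ (m : ℕ) :
    qTriangular (m + 1) = qTriangular m + q ^ m * qNum (m + 1) := by
  rw [qTriangular, qTriangular, qNum]
  field_simp
  ring

lemma qTriangular_mem_intPoly (m : ℕ) : qTriangular m ∈ intPoly := by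
  induction m with
  | zero => simp [qTriangular]
  | succ m ih =>
    rw [qTriangular_succ]
    exact add_mem ih (mul_mem (pow_mem q_mem_intPoly m) (qNum_mem_intPoly _))

lemma B_succ (m : ℕ) : B (m + 1) = qNum (m + 2) * qTriangular m := by
  rw [B, Nat.add_sub_cancel, qNum, qTriangular]
  field_simp

lemma A_succ (m : ℕ) : A (m + 1) = (1 + q ^ 2) * qNum (m + 1) * B (m + 1) := by
  rw [A, B, Nat.add_sub_cancel, qNum]
  field_simp
  ring

lemma C_eq (n : ℕ) : C n = qTriangular (n + 1) - qNum (n + 1) := by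
  rw [_root_.C, qTriangular, qNum]
  field_simp
  ring

/-- For every `n ≥ 3`, the rational function `T(n) ∈ ℚ(q)` is a polynomial in `q`
with integer coefficients. -/
theorem T_is_integer_polynomial (n : ℕ) (hn : 3 ≤ n) :
    ∃ p : Polynomial ℤ,
      T n = algebraMap (Polynomial ℚ) (RatFunc ℚ) (p.map (Int.castRingHom ℚ)) := by
  obtain ⟨m, rfl⟩ : ∃ m, n = m + 1 := ⟨n - 1, by omega⟩
  have hT : T (m + 1) =
      A (m + 1) - (B (m + 1) - 1) * qNum (m + 2) - (qNum m ^ 2 - 1) * C (m + 1) := by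
    rw [T, Nat.add_sub_cancel, qNum, qNum]
  obtain ⟨p, hp⟩ : T (m + 1) ∈ intPoly := by
    rw [hT, A_succ, B_succ, C_eq]
    apply_rules [sub_mem, mul_mem, add_mem, pow_mem, one_mem, q_mem_intPoly, qNum_mem_intPoly,
      qTriangular_mem_intPoly]
  exact ⟨p, hp.symm⟩
end
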